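/- Let s ≥ r ≥ 1 be integers and let ε > 0 satisfy 1/s − 3ε > 0. Let X, Y be disjoint finite nonempty sets and let c, c' : X×Y → [s] be two edge-colorings of the pair (X,Y). Suppose that under c every color ν ∈ [s] has density d_ν(X,Y) ∈ (1/s − ε, 1/s + ε), and that under c' at most r−1 colors have density at least 2ε on (X,Y). Then c and c' differ on at least (s−r+1)·(1/s − 3ε)·|X|·|Y| edges. -/
import Mathlib


open Finset

/-- The density of the color `ν` on the pair `(X', Y')` under the edge-coloring `c`. -/
noncomputable def colDensity {V : Type*} {s : ℕ} (c : V → V → Fin s) (ν : Fin s)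
    (X' Y' : Finset V) : ℝ :=
  (((X' ×ˢ Y').filter fun p => c p.1 p.2 = ν).card : ℝ) / ((X'.card : ℝ) * (Y'.card : ℝ))

/-- **Edit count on a balanced pair.**  Let `s ≥ r ≥ 1` and `ε > 0` with `1/s - 3ε > 0`.
Let `c, c'` be edge-colorings of a pair `(X, Y)` of nonempty disjoint finite sets such that
under `c` every color has density in `(1/s - ε, 1/s + ε)`, while under `c'` at most `r - 1`
colors have density at least `2ε`.  Then `c` and `c'` differ on at least
`(s - r + 1)(1/s - 3ε)|X||Y|` edges. -/
theorem edit_count_lower_bound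
    (s r : ℕ) (hr : 1 ≤ r) (hrs : r ≤ s)
    (ε : ℝ) (hε : 0 < ε) (hε3 : 0 < 1 / (s : ℝ) - 3 * ε)
    {V : Type*} (X Y : Finset V) (hX : X.Nonempty) (hY : Y.Nonempty)
    (hXY : Disjoint X Y)
    (c c' : V → V → Fin s)
    (hc : ∀ ν : Fin s, 1 / (s : ℝ) - ε < colDensity c ν X Y ∧
      colDensity c ν X Y < 1 / (s : ℝ) + ε)
    (hc' : (univ.filter fun ν : Fin s => 2 * ε ≤ colDensity c' ν X Y).card ≤ r - 1) :
    ((s : ℝ) - r + 1) * (1 / (s : ℝ) - 3 * ε) * X.card * Y.card ≤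
      (((X ×ˢ Y).filter fun p => c p.1 p.2 ≠ c' p.1 p.2).card : ℝ) := by
  classical
  have hXc : 0 < (X.card : ℝ) := by exact_mod_cast hX.card_pos
  have hYc : 0 < (Y.card : ℝ) := by exact_mod_cast hY.card_pos
  have hN : 0 < (X.card : ℝ) * Y.card := mul_pos hXc hYc
  set S := univ.filter fun ν : Fin s => ¬ 2 * ε ≤ colDensity c' ν X Y with hSdef
  -- cardinality of S
  have hsplit : (univ.filter fun ν : Fin s => 2 * ε ≤ colDensity c' ν X Y).card + S.card
      = s := by
    rw [hSdef, Finset.card_filter_add_card_filter_not]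
    simp
  have hcardS : (s : ℝ) - r + 1 ≤ (S.card : ℝ) := by
    have h1 : s + 1 ≤ S.card + r := by omega
    have h1' : (s : ℝ) + 1 ≤ (S.card : ℝ) + r := by exact_mod_cast h1
    linarith
  -- the per-color sets
  set A : Fin s → Finset (V × V) :=
    fun ν => (X ×ˢ Y).filter fun p => c p.1 p.2 = ν ∧ c' p.1 p.2 ≠ ν with hAdef
  have key : ∀ ν ∈ S, (1 / (s : ℝ) - 3 * ε) * ((X.card : ℝ) * Y.card) ≤ ((A ν).card : ℝ) := by
    intro ν hν
    rw [hSdef, mem_filter] at hν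
    have hd' : colDensity c' ν X Y < 2 * ε := lt_of_not_ge hν.2
    have hd : 1 / (s : ℝ) - ε < colDensity c ν X Y := (hc ν).1
    have e1 : (((X ×ˢ Y).filter fun p => c p.1 p.2 = ν).card : ℝ)
        = colDensity c ν X Y * ((X.card : ℝ) * Y.card) := by
      rw [colDensity]; field_simp
    have e2 : (((X ×ˢ Y).filter fun p => c' p.1 p.2 = ν).card : ℝ)
        = colDensity c' ν X Y * ((X.card : ℝ) * Y.card) := by
      rw [colDensity]; field_simp
    have hsub : ((X ×ˢ Y).filter fun p => c p.1 p.2 = ν) ⊆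
        A ν ∪ ((X ×ˢ Y).filter fun p => c' p.1 p.2 = ν) := by
      intro p hp
      rw [mem_filter] at hp
      rw [mem_union, hAdef]
      by_cases h : c' p.1 p.2 = ν
      · exact Or.inr (mem_filter.2 ⟨hp.1, h⟩)
      · exact Or.inl (mem_filter.2 ⟨hp.1, hp.2, h⟩)
    have hcard := (Finset.card_le_card hsub).trans (Finset.card_union_le _ _)
    have hcard' : (((X ×ˢ Y).filter fun p => c p.1 p.2 = ν).card : ℝ)
        ≤ ((A ν).card : ℝ) + (((X ×ˢ Y).filter fun p => c' p.1 p.2 = ν).card : ℝ) := by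
      exact_mod_cast hcard
    rw [e1, e2] at hcard'
    nlinarith
  -- disjointness and union bound
  have hdisj : ∀ ν₁ ∈ S, ∀ ν₂ ∈ S, ν₁ ≠ ν₂ → Disjoint (A ν₁) (A ν₂) := by
    intro ν₁ _ ν₂ _ hne
    rw [Finset.disjoint_left]
    intro p hp1 hp2
    rw [hAdef, mem_filter] at hp1 hp2
    exact hne (hp1.2.1 ▸ hp2.2.1 ▸ rfl)
  have hunion : S.biUnion A ⊆ (X ×ˢ Y).filter fun p => c p.1 p.2 ≠ c' p.1 p.2 := by
    intro p hp
    rw [Finset.mem_biUnion] at hp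
    obtain ⟨ν, _, hpν⟩ := hp
    rw [hAdef, mem_filter] at hpν
    rw [mem_filter]
    exact ⟨hpν.1, fun h => hpν.2.2 (h ▸ hpν.2.1)⟩
  have hsum : ∑ ν ∈ S, ((A ν).card : ℝ)
      ≤ (((X ×ˢ Y).filter fun p => c p.1 p.2 ≠ c' p.1 p.2).card : ℝ) := by
    have : ∑ ν ∈ S, (A ν).card = (S.biUnion A).card := (Finset.card_biUnion hdisj).symm
    have h2 := Finset.card_le_card hunion
    have : ∑ ν ∈ S, (A ν).card ≤ ((X ×ˢ Y).filter fun p => c p.1 p.2 ≠ c' p.1 p.2).card :=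
      this ▸ h2
    calc ∑ ν ∈ S, ((A ν).card : ℝ) = ((∑ ν ∈ S, (A ν).card : ℕ) : ℝ) := by push_cast; ring
    _ ≤ _ := by exact_mod_cast this
  have hlb : (S.card : ℝ) * ((1 / (s : ℝ) - 3 * ε) * ((X.card : ℝ) * Y.card))
      ≤ ∑ ν ∈ S, ((A ν).card : ℝ) := by
    have := Finset.card_nsmul_le_sum S (fun ν => ((A ν).card : ℝ))
      ((1 / (s : ℝ) - 3 * ε) * ((X.card : ℝ) * Y.card)) key
    simpa [nsmul_eq_mul] using this
  have hb : 0 ≤ (1 / (s : ℝ) - 3 * ε) * ((X.card : ℝ) * Y.card) :=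
    mul_nonneg hε3.le hN.le
  nlinarith [mul_le_mul_of_nonneg_right hcardS hb]
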